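/- For every (e₁,e₂) ∈ ℂ², the product defined on the basis {Aₙ}_{n∈ℤ} of the genus-one Krichever–Novikov function algebra family makes A^(e₁,e₂) a commutative associative unital ℂ-algebra with unit A₀. -/

import Mathlib

/-!
On basis vectors the product is `Aₙ · Aₘ = T ^ c(n, m) Aₙ₊ₘ`, where `c(n, m) ∈ {0, 1}` is the carry
produced when adding the parities of `n` and `m`, and `T` is the translation-invariant operator
`Aⱼ ↦ Aⱼ + 3e₁Aⱼ₋₂ + (e₁ - e₂)(2e₁ + e₂)Aⱼ₋₄`. Because `T` only shifts indices by even amounts it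
does not change carries, so the product is `T`-linear in each variable. Associativity on basis
vectors then reduces to the 2-cocycle identity `c(n, m) + c(n + m, k) = c(m, k) + c(n, m + k)`,
and commutativity and the unit law are immediate from the symmetry of `c` and `c(0, m) = 0`.
-/

open scoped Classical

/-- The product of the genus-one Krichever–Novikov function algebra family
`A^(e₁,e₂)`, on the ℂ-vector space with basis `{Aₙ}_{n∈ℤ}` (modeled as
`ℤ →₀ ℂ` with `Aₙ = Finsupp.single n 1`), extended bilinearly from:
`Aₙ·Aₘ = Aₙ₊ₘ` if `n` or `m` is even, and
`Aₙ·Aₘ = Aₙ₊ₘ + 3e₁Aₙ₊ₘ₋₂ + (e₁−e₂)(2e₁+e₂)Aₙ₊ₘ₋₄` if both `n, m` are odd. -/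
noncomputable def Amul (e₁ e₂ : ℂ) (f g : ℤ →₀ ℂ) : ℤ →₀ ℂ :=
  f.sum fun n a => g.sum fun m b =>
    (a * b) •
      (if Odd n ∧ Odd m then
        Finsupp.single (n + m) 1 + (3 * e₁) • Finsupp.single (n + m - 2) 1
          + ((e₁ - e₂) * (2 * e₁ + e₂)) • Finsupp.single (n + m - 4) 1
       else Finsupp.single (n + m) 1)

open Finsupp

namespace KricheverNovikov

def parityCarry (n m : ℤ) : ℕ := if Odd n ∧ Odd m then 1 else 0

lemma parityCarry_comm (n m : ℤ) : parityCarry n m = parityCarry m n := by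
  simp only [parityCarry, and_comm]

lemma parityCarry_zero_left (m : ℤ) : parityCarry 0 m = 0 := by
  simp [parityCarry]

lemma parityCarry_add_even_left {d : ℤ} (hd : Even d) (n m : ℤ) :
    parityCarry (n + d) m = parityCarry n m := by
  rw [Int.even_iff] at hd
  simp only [parityCarry, Int.odd_iff]
  split_ifs <;> omega

lemma parityCarry_cocycle (n m k : ℤ) :
    parityCarry n m + parityCarry (n + m) k = parityCarry m k + parityCarry n (m + k) := by
  simp only [parityCarry, Int.odd_iff]
  split_ifs <;> omega

variable (e₁ e₂ : ℂ)

noncomputable def twist : Module.End ℂ (ℤ →₀ ℂ) :=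
  linearCombination ℂ fun j => single j 1 + (3 * e₁) • single (j - 2) 1
    + ((e₁ - e₂) * (2 * e₁ + e₂)) • single (j - 4) 1

lemma twist_single (j : ℤ) : twist e₁ e₂ (single j 1) = single j 1 + (3 * e₁) • single (j - 2) 1
    + ((e₁ - e₂) * (2 * e₁ + e₂)) • single (j - 4) 1 := by
  rw [twist, linearCombination_single, one_smul]

noncomputable def knMul : (ℤ →₀ ℂ) →ₗ[ℂ] (ℤ →₀ ℂ) →ₗ[ℂ] (ℤ →₀ ℂ) :=
  linearCombination ℂ fun n => linearCombination ℂ fun m =>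
    (twist e₁ e₂ ^ parityCarry n m) (single (n + m) 1)

lemma knMul_single_single (n m : ℤ) :
    knMul e₁ e₂ (single n 1) (single m 1) = (twist e₁ e₂ ^ parityCarry n m) (single (n + m) 1) := by
  rw [knMul, linearCombination_single, one_smul, linearCombination_single, one_smul]

lemma Amul_eq_knMul (f g : ℤ →₀ ℂ) : Amul e₁ e₂ f g = knMul e₁ e₂ f g := by
  rw [← (knMul e₁ e₂).sum_repr_mul_repr_mul Finsupp.basisSingleOne Finsupp.basisSingleOne f g]
  simp only [basisSingleOne_repr, LinearEquiv.refl_apply, coe_basisSingleOne, knMul_single_single,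
    smul_smul, Amul]
  refine sum_congr fun n _ => sum_congr fun m _ => ?_
  unfold parityCarry
  split_ifs <;> simp [twist_single]

lemma knMul_comm (f g : ℤ →₀ ℂ) : knMul e₁ e₂ f g = knMul e₁ e₂ g f := by
  suffices (knMul e₁ e₂).flip = knMul e₁ e₂ from congr($this g f)
  refine LinearMap.ext_basis Finsupp.basisSingleOne Finsupp.basisSingleOne fun n m => ?_
  simp only [coe_basisSingleOne, LinearMap.flip_apply, knMul_single_single, parityCarry_comm,
    add_comm]

lemma knMul_single_zero_one (f : ℤ →₀ ℂ) : knMul e₁ e₂ (single 0 1) f = f := by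
  suffices knMul e₁ e₂ (single 0 1) = LinearMap.id from congr($this f)
  refine Finsupp.basisSingleOne.ext fun m => ?_
  simp [knMul_single_single, parityCarry_zero_left]

lemma knMul_twist (f g : ℤ →₀ ℂ) :
    knMul e₁ e₂ (twist e₁ e₂ f) g = twist e₁ e₂ (knMul e₁ e₂ f g) := by
  suffices knMul e₁ e₂ ∘ₗ twist e₁ e₂ = (knMul e₁ e₂).compr₂ (twist e₁ e₂) from congr($this f g)
  refine LinearMap.ext_basis Finsupp.basisSingleOne Finsupp.basisSingleOne fun j k => ?_
  have h2 : Even (-2 : ℤ) := by decide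
  have h4 : Even (-4 : ℤ) := by decide
  simp only [coe_basisSingleOne, LinearMap.comp_apply, LinearMap.compr₂_apply, twist_single,
    map_add, map_smul, LinearMap.add_apply, LinearMap.smul_apply, knMul_single_single,
    sub_eq_add_neg, parityCarry_add_even_left h2, parityCarry_add_even_left h4]
  rw [← Module.End.mul_apply, ← pow_succ', pow_succ, Module.End.mul_apply, twist_single]
  simp only [map_add, map_smul, sub_eq_add_neg, add_right_comm]

lemma knMul_twist_pow (a : ℕ) (f g : ℤ →₀ ℂ) :
    knMul e₁ e₂ ((twist e₁ e₂ ^ a) f) g = (twist e₁ e₂ ^ a) (knMul e₁ e₂ f g) := by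
  induction a with
  | zero => rfl
  | succ a ih => rw [pow_succ', Module.End.mul_apply, knMul_twist, ih, Module.End.mul_apply]

lemma knMul_assoc_single (n m k : ℤ) :
    knMul e₁ e₂ (knMul e₁ e₂ (single n 1) (single m 1)) (single k 1)
      = knMul e₁ e₂ (single n 1) (knMul e₁ e₂ (single m 1) (single k 1)) :=
  calc _ = (twist e₁ e₂ ^ (parityCarry n m + parityCarry (n + m) k)) (single (n + m + k) 1) := by
        rw [knMul_single_single, knMul_twist_pow, knMul_single_single, pow_add,
          Module.End.mul_apply]
    _ = (twist e₁ e₂ ^ (parityCarry m k + parityCarry n (m + k))) (single (n + (m + k)) 1) := by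
        rw [parityCarry_cocycle, add_assoc]
    _ = _ := by
        rw [knMul_single_single e₁ e₂ m k, knMul_comm, knMul_twist_pow, knMul_single_single,
          parityCarry_comm (m + k), add_comm (m + k), pow_add, Module.End.mul_apply]

lemma knMul_assoc (f g h : ℤ →₀ ℂ) :
    knMul e₁ e₂ (knMul e₁ e₂ f g) h = knMul e₁ e₂ f (knMul e₁ e₂ g h) := by
  suffices (knMul e₁ e₂).compr₂ ((knMul e₁ e₂).flip h) = (knMul e₁ e₂).compl₂ ((knMul e₁ e₂).flip h)
    from congr($this f g)
  refine LinearMap.ext_basis Finsupp.basisSingleOne Finsupp.basisSingleOne fun n m => ?_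
  suffices knMul e₁ e₂ (knMul e₁ e₂ (single n 1) (single m 1))
      = knMul e₁ e₂ (single n 1) ∘ₗ knMul e₁ e₂ (single m 1) by simpa using congr($this h)
  exact Finsupp.basisSingleOne.ext fun k => by simpa using knMul_assoc_single e₁ e₂ n m k

end KricheverNovikov

open KricheverNovikov in
/-- For every `(e₁,e₂) ∈ ℂ²`, the product defined on the basis
`{Aₙ}_{n∈ℤ}` of the genus-one Krichever–Novikov function algebra family
makes `A^(e₁,e₂)` a commutative associative unital ℂ-algebra with unit `A₀`. -/
theorem A_comm_assoc_unital (e₁ e₂ : ℂ) :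
    (∀ f g : ℤ →₀ ℂ, Amul e₁ e₂ f g = Amul e₁ e₂ g f) ∧
    (∀ f g h : ℤ →₀ ℂ,
      Amul e₁ e₂ (Amul e₁ e₂ f g) h = Amul e₁ e₂ f (Amul e₁ e₂ g h)) ∧
    (∀ f : ℤ →₀ ℂ, Amul e₁ e₂ (Finsupp.single 0 1) f = f) ∧
    (∀ f : ℤ →₀ ℂ, Amul e₁ e₂ f (Finsupp.single 0 1) = f) := by
  simp only [Amul_eq_knMul]
  exact ⟨knMul_comm e₁ e₂, knMul_assoc e₁ e₂, knMul_single_zero_one e₁ e₂,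
    fun f => (knMul_comm e₁ e₂ f _).trans (knMul_single_zero_one e₁ e₂ f)⟩
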